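/- Let G be a König-Egerváry graph with vertex set V, and suppose there exists a maximum stable set S of G such that the set of edges with one endpoint in S and the other in V − S spans a forest (contains no cycle). Then ξ(G) + η(G) = α(G), σ(G) + η(G) = μ(G), and ξ(G) + 2η(G) + σ(G) = |V(G)|. -/

import Mathlib

open scoped Classical

namespace KEG

variable {V : Type*}

/-- `S` is a stable (independent) set of vertices of `G`. -/
def IsStable (G : SimpleGraph V) (S : Finset V) : Prop :=
  ∀ ⦃x⦄, x ∈ S → ∀ ⦃y⦄, y ∈ S → ¬G.Adj x y

/-- The stability number `α(G)`: maximum cardinality of a stable set. -/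
noncomputable def alphaNum (G : SimpleGraph V) : ℕ :=
  sSup {n | ∃ S : Finset V, IsStable G S ∧ S.card = n}

/-- `S` is a maximum stable set of `G`. -/
def IsMaxStable (G : SimpleGraph V) (S : Finset V) : Prop :=
  IsStable G S ∧ S.card = alphaNum G

/-- `M` is a matching of `G`: a set of edges of `G`, pairwise non-incident. -/
def IsMatching (G : SimpleGraph V) (M : Finset (Sym2 V)) : Prop :=
  (∀ e ∈ M, e ∈ G.edgeSet) ∧
    ∀ e ∈ M, ∀ f ∈ M, e ≠ f → ∀ v : V, v ∈ e → v ∉ f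

/-- The matching number `μ(G)`: maximum cardinality of a matching. -/
noncomputable def muNum (G : SimpleGraph V) : ℕ :=
  sSup {n | ∃ M : Finset (Sym2 V), IsMatching G M ∧ M.card = n}

/-- A perfect matching: a matching covering every vertex. -/
def IsPerfectMatching (G : SimpleGraph V) (M : Finset (Sym2 V)) : Prop :=
  IsMatching G M ∧ ∀ v : V, ∃ e ∈ M, v ∈ e

/-- A maximal matching: a matching such that no edge of `G` can be added to it
while keeping pairwise non-incidence, i.e. every edge of `G` outside `M` is
incident to an edge of `M`. -/
def IsMaximalMatching (G : SimpleGraph V) (M : Finset (Sym2 V)) : Prop :=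
  IsMatching G M ∧ ∀ e ∈ G.edgeSet, e ∉ M → ∃ f ∈ M, ∃ v : V, v ∈ e ∧ v ∈ f

/-- `G` is a König-Egerváry graph: `α(G) + μ(G) = |V(G)|`. -/
def KonigEgervary (G : SimpleGraph V) [Fintype V] : Prop :=
  alphaNum G + muNum G = Fintype.card V

/-- `e` is an α-critical edge of `G`: `α(G - e) > α(G)`. -/
def IsAlphaCritical (G : SimpleGraph V) (e : Sym2 V) : Prop :=
  e ∈ G.edgeSet ∧ alphaNum G < alphaNum (G.deleteEdges {e})

/-- `e` is a μ-critical edge of `G`: `μ(G - e) < μ(G)`. -/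
def IsMuCritical (G : SimpleGraph V) (e : Sym2 V) : Prop :=
  e ∈ G.edgeSet ∧ muNum (G.deleteEdges {e}) < muNum G

/-- `core(G)`: the set of vertices belonging to every maximum stable set of `G`. -/
def core (G : SimpleGraph V) : Set V :=
  {v | ∀ S : Finset V, IsMaxStable G S → v ∈ S}

/-- `ξ(G) = |core(G)|`. -/
noncomputable def xi (G : SimpleGraph V) : ℕ := (core G).ncard

/-- `σ(G)`: the number of vertices belonging to no maximum stable set of `G`. -/
noncomputable def sigmaNum (G : SimpleGraph V) : ℕ :=
  {v : V | ∀ S : Finset V, IsMaxStable G S → v ∉ S}.ncard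

/-- `η(G)`: the number of α-critical edges of `G`. -/
noncomputable def eta (G : SimpleGraph V) : ℕ :=
  {e : Sym2 V | IsAlphaCritical G e}.ncard

/-- `N(A)`: the set of vertices adjacent to some vertex of `A`. -/
def nbhd (G : SimpleGraph V) (A : Set V) : Set V :=
  {v | ∃ a ∈ A, G.Adj a v}

/-- `N[A] = A ∪ N(A)`: the closed neighborhood of `A`. -/
def closedNbhd (G : SimpleGraph V) (A : Set V) : Set V :=
  A ∪ nbhd G A

/-! Fix a maximum matching `M`. In a König–Egerváry graph a maximum stable set `T` has
`|T| + |M| = |V|`, so by counting, `M` matches every vertex outside `T` to a vertex of `T`;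
likewise every α-critical edge lies in `M`. Thus `M` pairs each `v ∉ S` with its mate in `S`.
The edge from `v` to its mate is α-critical exactly when `v` lies in some maximum stable set `T`:
the edges between `S \ T` and `T \ S` form a forest, in which this edge is a bridge, and
exchanging `S` for `T` on the side of `v` gives a stable set of `G - e` with `α + 1` vertices.
Hence `η` counts the vertices outside `S` in the union of all maximum stable sets, and the same
number of vertices of `S` (their mates) lie outside the core; the three identities follow. -/

section Basic

variable {G : SimpleGraph V} {A B : Finset V} {M : Finset (Sym2 V)} {e f : Sym2 V} {u v : V}

lemma IsStable.mono (hA : IsStable G A) (hBA : B ⊆ A) : IsStable G B :=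
  fun _ hx _ hy => hA (hBA hx) (hBA hy)

lemma IsStable.exists_notMem (hA : IsStable G A) (he : e ∈ G.edgeSet) : ∃ v ∈ e, v ∉ A := by
  induction e using Sym2.inductionOn with
  | _ x y =>
    by_cases hx : x ∈ A
    · exact ⟨y, Sym2.mem_mk_right x y, fun hy => hA hx hy he⟩
    · exact ⟨x, Sym2.mem_mk_left x y, hx⟩

lemma IsStable.of_deleteEdges (hA : IsStable (G.deleteEdges {s(u, v)}) A) (hu : u ∉ A) :
    IsStable G A := by
  intro x hx y hy hxy
  refine hA hx hy (SimpleGraph.deleteEdges_adj.2 ⟨hxy, fun hst => ?_⟩)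
  rcases Sym2.eq_iff.1 (Set.mem_singleton_iff.1 hst) with ⟨rfl, -⟩ | ⟨-, rfl⟩
  · exact hu hx
  · exact hu hy

lemma IsMatching.eq_of_mem_of_mem (hM : IsMatching G M) (he : e ∈ M) (hf : f ∈ M)
    (hve : v ∈ e) (hvf : v ∈ f) : e = f := by
  by_contra hef
  exact hM.2 e he f hf hef v hve hvf

lemma IsMatching.card_le_of_forall_exists (hM : IsMatching G M)
    (h : ∀ x ∈ A, ∃ y ∈ B, s(x, y) ∈ M) : A.card ≤ B.card :=
  Finset.card_le_card_of_forall_subsingleton (fun x y => s(x, y) ∈ M) h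
    fun y _ _ hx _ hx' => Sym2.congr_left.1 (hM.eq_of_mem_of_mem hx.2 hx'.2
      (Sym2.mem_mk_right _ y) (Sym2.mem_mk_right _ y))

variable [Fintype V]

lemma IsMatching.card_add_card_le (hM : IsMatching G M) (hA : ∀ e ∈ M, ∃ v ∈ e, v ∉ A) :
    M.card + A.card ≤ Fintype.card V := by
  have hMA : M.card ≤ Aᶜ.card :=
    Finset.card_le_card_of_forall_subsingleton (fun e v => v ∈ e)
      (fun e he => let ⟨v, hve, hvA⟩ := hA e he; ⟨v, Finset.mem_compl.2 hvA, hve⟩)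
      fun v _ _ he _ hf => hM.eq_of_mem_of_mem he.1 hf.1 he.2 hf.2
  rw [Finset.card_compl] at hMA
  have := A.card_le_univ
  omega

lemma bddAbove_setOf_isStable_card (G : SimpleGraph V) :
    BddAbove {n | ∃ A : Finset V, IsStable G A ∧ A.card = n} :=
  ⟨Fintype.card V, by rintro n ⟨A, -, rfl⟩; exact A.card_le_univ⟩

lemma IsStable.card_le_alphaNum (hA : IsStable G A) : A.card ≤ alphaNum G :=
  le_csSup (bddAbove_setOf_isStable_card G) ⟨A, hA, rfl⟩

lemma exists_isMaxStable (G : SimpleGraph V) : ∃ A : Finset V, IsMaxStable G A :=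
  Nat.sSup_mem (s := {n | ∃ A : Finset V, IsStable G A ∧ A.card = n})
    ⟨0, ∅, fun x hx => by simp at hx, rfl⟩ (bddAbove_setOf_isStable_card G)

lemma exists_isMatching_card_eq_muNum (G : SimpleGraph V) :
    ∃ M : Finset (Sym2 V), IsMatching G M ∧ M.card = muNum G :=
  Nat.sSup_mem (s := {n | ∃ M : Finset (Sym2 V), IsMatching G M ∧ M.card = n})
    ⟨0, ∅, ⟨by simp, by simp⟩, rfl⟩
    ⟨Fintype.card (Sym2 V), by rintro n ⟨M, -, rfl⟩; exact M.card_le_univ⟩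

lemma isAlphaCritical_iff : IsAlphaCritical G e ↔
    e ∈ G.edgeSet ∧ ∃ A : Finset V, IsStable (G.deleteEdges {e}) A ∧ alphaNum G < A.card := by
  refine and_congr_right fun _ => ⟨fun h => ?_, fun ⟨A, hA, hcard⟩ => ?_⟩
  · obtain ⟨A, hA, hcard⟩ := exists_isMaxStable (G.deleteEdges {e})
    exact ⟨A, hA, hcard ▸ h⟩
  · exact hcard.trans_le hA.card_le_alphaNum

lemma IsAlphaCritical.exists_isMaxStable (h : IsAlphaCritical G s(u, v)) :
    ∃ T : Finset V, IsMaxStable G T ∧ u ∉ T ∧ v ∈ T := by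
  obtain ⟨he, A, hA, hcard⟩ := isAlphaCritical_iff.1 h
  have hmem : ∀ {w}, w ∈ s(u, v) → w ∈ A := by
    intro w hw
    by_contra hwA
    rcases Sym2.mem_iff.1 hw with rfl | rfl
    · exact (hA.of_deleteEdges hwA).card_le_alphaNum.not_gt hcard
    · rw [Sym2.eq_swap] at hA
      exact (hA.of_deleteEdges hwA).card_le_alphaNum.not_gt hcard
  have hT : IsStable G (A.erase u) :=
    (hA.mono (A.erase_subset u)).of_deleteEdges (A.notMem_erase u)
  have := Finset.card_erase_of_mem (hmem (Sym2.mem_mk_left u v))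
  have := hT.card_le_alphaNum
  refine ⟨A.erase u, ⟨hT, by omega⟩, A.notMem_erase u, ?_⟩
  exact Finset.mem_erase.2 ⟨(G.mem_edgeSet.1 he).ne.symm, hmem (Sym2.mem_mk_right u v)⟩

end Basic

section KonigEgervary

variable [Fintype V] {G : SimpleGraph V} {M : Finset (Sym2 V)} {A T : Finset V} {e : Sym2 V}
  {x : V}

lemma card_le_alphaNum_of_forall_exists_notMem (hG : KonigEgervary G) (hM : IsMatching G M)
    (hMcard : M.card = muNum G) (hA : ∀ e ∈ M, ∃ v ∈ e, v ∉ A) : A.card ≤ alphaNum G := by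
  have := hM.card_add_card_le hA
  unfold KonigEgervary at hG
  omega

lemma IsMaxStable.exists_mk_mem_of_notMem (hG : KonigEgervary G) (hM : IsMatching G M)
    (hMcard : M.card = muNum G) (hT : IsMaxStable G T) (hx : x ∉ T) :
    ∃ u ∈ T, s(u, x) ∈ M := by
  by_contra! h
  suffices (insert x T).card ≤ alphaNum G by
    rw [Finset.card_insert_of_notMem hx, hT.2] at this
    omega
  refine card_le_alphaNum_of_forall_exists_notMem hG hM hMcard fun e he => ?_
  obtain ⟨w, hwe, hwT⟩ := hT.1.exists_notMem (hM.1 e he)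
  obtain ⟨u, rfl⟩ := Sym2.mem_iff_exists.1 hwe
  by_cases hwx : w = x
  · subst hwx
    refine ⟨u, Sym2.mem_mk_right _ _, ?_⟩
    simp only [Finset.mem_insert, not_or]
    exact ⟨(G.mem_edgeSet.1 (hM.1 _ he)).ne.symm, fun huT => h u huT (Sym2.eq_swap ▸ he)⟩
  · exact ⟨w, hwe, by simp [hwx, hwT]⟩

lemma IsAlphaCritical.mem (hG : KonigEgervary G) (hM : IsMatching G M)
    (hMcard : M.card = muNum G) (h : IsAlphaCritical G e) : e ∈ M := by
  obtain ⟨-, A, hA, hcard⟩ := isAlphaCritical_iff.1 h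
  by_contra heM
  refine (card_le_alphaNum_of_forall_exists_notMem hG hM hMcard fun f hf => ?_).not_gt hcard
  refine hA.exists_notMem ?_
  rw [SimpleGraph.edgeSet_deleteEdges]
  exact ⟨hM.1 f hf, fun hfe => heM (Set.mem_singleton_iff.1 hfe ▸ hf)⟩

end KonigEgervary

lemma _root_.SimpleGraph.eq_and_eq_of_reachable_deleteEdges {H : SimpleGraph V} {u v x y : V}
    (hxy : H.Adj x y) (hx : (H.deleteEdges {s(u, v)}).Reachable v x)
    (hy : ¬(H.deleteEdges {s(u, v)}).Reachable v y) : x = v ∧ y = u := by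
  by_cases he : s(x, y) = s(u, v)
  · rcases Sym2.eq_iff.1 he with ⟨rfl, rfl⟩ | h
    · exact absurd (SimpleGraph.Reachable.refl y) hy
    · exact h
  · exact absurd (hx.trans (SimpleGraph.deleteEdges_adj.2 ⟨hxy, he⟩).reachable) hy

section Swap

variable {G : SimpleGraph V} {S T : Finset V} {B : Set V} {u v : V}

lemma IsStable.filter_union_filter (hS : IsStable G S) (hT : IsStable G T)
    (hB : ∀ x ∈ T, x ∈ B → ∀ y ∈ S, y ∉ B → G.Adj x y → x = v ∧ y = u) :
    IsStable (G.deleteEdges {s(u, v)}) (T.filter (· ∈ B) ∪ S.filter (· ∉ B)) := by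
  intro x hx y hy hxy
  rw [SimpleGraph.deleteEdges_adj, Set.mem_singleton_iff] at hxy
  simp only [Finset.mem_union, Finset.mem_filter] at hx hy
  rcases hx with ⟨hxT, hxB⟩ | ⟨hxS, hxB⟩ <;> rcases hy with ⟨hyT, hyB⟩ | ⟨hyS, hyB⟩
  · exact hT hxT hyT hxy.1
  · obtain ⟨rfl, rfl⟩ := hB x hxT hxB y hyS hyB hxy.1
    exact hxy.2 Sym2.eq_swap
  · obtain ⟨rfl, rfl⟩ := hB y hyT hyB x hxS hxB hxy.1.symm
    exact hxy.2 rfl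
  · exact hS hxS hyS hxy.1

lemma card_lt_card_filter_union_filter (hvT : v ∈ T) (hvB : v ∈ B)
    (h : (S.filter (· ∈ B)).card ≤ ((T.filter (· ∈ B)).erase v).card) :
    S.card < (T.filter (· ∈ B) ∪ S.filter (· ∉ B)).card := by
  have hdisj : Disjoint (T.filter (· ∈ B)) (S.filter (· ∉ B)) :=
    Finset.disjoint_filter_filter_not T S (· ∈ B)
  have hv : v ∈ T.filter (· ∈ B) := Finset.mem_filter.2 ⟨hvT, hvB⟩
  rw [Finset.card_union_of_disjoint hdisj, ← Finset.card_filter_add_card_filter_not (· ∈ B)]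
  rw [Finset.card_erase_of_mem hv] at h
  have := Finset.card_pos.2 ⟨v, hv⟩
  omega

end Swap

theorem isAlphaCritical_of_isAcyclic [Fintype V] {G : SimpleGraph V} {M : Finset (Sym2 V)}
    {S T : Finset V} {u v : V} (hG : KonigEgervary G) (hM : IsMatching G M)
    (hMcard : M.card = muNum G) (hS : IsMaxStable G S)
    (hforest : (SimpleGraph.fromRel fun x y => G.Adj x y ∧ x ∈ S ∧ y ∉ S).IsAcyclic)
    (hT : IsMaxStable G T) (hu : u ∈ S) (hv : v ∈ T) (hvS : v ∉ S) (huv : s(u, v) ∈ M) :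
    IsAlphaCritical G s(u, v) := by
  -- `B` is the side of `v` of the bridge `uv` in the forest `H`; the vertices of `S` on that
  -- side are matched into `T` on that side, away from `v`.
  let H := SimpleGraph.fromRel fun x y => G.Adj x y ∧ (x ∈ S ∧ x ∉ T) ∧ (y ∈ T ∧ y ∉ S)
  let B : Set V := {w | (H.deleteEdges {s(u, v)}).Reachable v w}
  have hadj : ∀ {x y}, s(x, y) ∈ M → G.Adj x y := fun h => hM.1 _ h
  have hHuv : H.Adj u v :=
    ⟨(hadj huv).ne, Or.inl ⟨hadj huv, ⟨hu, fun huT => hT.1 huT hv (hadj huv)⟩, hv, hvS⟩⟩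
  have hvB : v ∈ B := SimpleGraph.Reachable.refl v
  have hH : H.IsAcyclic := hforest.anti fun x y hxy => by
    exact ⟨hxy.1, hxy.2.imp (fun h => ⟨h.1, h.2.1.1, h.2.2.2⟩) fun h => ⟨h.1, h.2.1.1, h.2.2.2⟩⟩
  have huB : u ∉ B := fun h => SimpleGraph.isAcyclic_iff_forall_adj_isBridge.1 hH hHuv h.symm
  have hBS : ∀ x ∈ B, x ∈ S → x ∉ T := by
    rintro x ⟨p⟩ hxS hxT
    have hp := p.adj_penultimate
      (SimpleGraph.Walk.not_nil_of_ne (ne_of_mem_of_not_mem hxS hvS).symm)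
    rcases (SimpleGraph.deleteEdges_adj.1 hp).1.2 with h | h
    · exact h.2.2.2 hxS
    · exact h.2.1.2 hxT
  refine isAlphaCritical_iff.2 ⟨hM.1 _ huv, _, hS.1.filter_union_filter hT.1 ?_, hS.2 ▸
    card_lt_card_filter_union_filter hv hvB (hM.card_le_of_forall_exists ?_)⟩
  · intro x hxT hxB y hyS hyB hxy
    refine SimpleGraph.eq_and_eq_of_reachable_deleteEdges (H := H) ⟨hxy.ne, Or.inr ?_⟩ hxB hyB
    exact ⟨hxy.symm, ⟨hyS, fun hyT => hT.1 hxT hyT hxy⟩, hxT, fun hxS => hS.1 hxS hyS hxy⟩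
  · intro x hx
    obtain ⟨hxS, hxB⟩ := Finset.mem_filter.1 hx
    obtain ⟨w, hwT, hwx⟩ := hT.exists_mk_mem_of_notMem hG hM hMcard (hBS x hxB hxS)
    have hwS : w ∉ S := fun hwS => hS.1 hwS hxS (hadj hwx)
    have hwv : w ≠ v := by
      rintro rfl
      have := Sym2.congr_right.1 (hM.eq_of_mem_of_mem hwx huv (Sym2.mem_mk_left w x)
        (Sym2.mem_mk_right u w) |>.trans Sym2.eq_swap)
      exact huB (this ▸ hxB)
    have hwB : w ∈ B := by
      by_contra hwB
      have hH : H.Adj x w :=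
        ⟨(hadj hwx).ne.symm, Or.inl ⟨(hadj hwx).symm, ⟨hxS, hBS x hxB hxS⟩, hwT, hwS⟩⟩
      exact hvS ((SimpleGraph.eq_and_eq_of_reachable_deleteEdges hH hxB hwB).1 ▸ hxS)
    exact ⟨w, Finset.mem_erase.2 ⟨hwv, Finset.mem_filter.2 ⟨hwT, hwB⟩⟩, Sym2.eq_swap ▸ hwx⟩

def corona (G : SimpleGraph V) : Set V :=
  {v | ∃ T : Finset V, IsMaxStable G T ∧ v ∈ T}

section Counting

variable [Fintype V] {G : SimpleGraph V} {S : Finset V}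

lemma sigmaNum_add_ncard_corona (G : SimpleGraph V) :
    sigmaNum G + (corona G).ncard = Fintype.card V := by
  have : {v : V | ∀ T : Finset V, IsMaxStable G T → v ∉ T} = (corona G)ᶜ := by
    ext v
    simp [corona]
  rw [sigmaNum, this, add_comm, Set.ncard_add_ncard_compl, Nat.card_eq_fintype_card]

lemma IsMaxStable.ncard_corona_sdiff_add_alphaNum (hS : IsMaxStable G S) :
    (corona G \ S).ncard + alphaNum G = (corona G).ncard := by
  rw [← hS.2, ← Set.ncard_coe_finset S]
  exact Set.ncard_sdiff_add_ncard_of_subset fun v hv => ⟨S, hS, hv⟩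

lemma IsMaxStable.ncard_sdiff_core_add_xi (hS : IsMaxStable G S) :
    (↑S \ core G).ncard + xi G = alphaNum G := by
  rw [xi, ← hS.2, ← Set.ncard_coe_finset S]
  exact Set.ncard_sdiff_add_ncard_of_subset fun v hv => hv S hS

end Counting

section Mate

variable {G : SimpleGraph V} {M : Finset (Sym2 V)} {S : Finset V} {mate : V → V}

lemma injOn_mate (hM : IsMatching G M) (hpa : ∀ v ∉ S, mate v ∈ S ∧ s(mate v, v) ∈ M) :
    Set.InjOn mate (↑S)ᶜ := by
  intro v hv w hw hvw
  have := hM.eq_of_mem_of_mem (hpa v hv).2 (hpa w hw).2 (Sym2.mem_mk_left _ _)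
    (hvw ▸ Sym2.mem_mk_left _ _)
  rw [hvw] at this
  exact Sym2.congr_right.1 this

lemma injOn_mk_mate (hpa : ∀ v ∉ S, mate v ∈ S ∧ s(mate v, v) ∈ M) :
    Set.InjOn (fun v => s(mate v, v)) (↑S)ᶜ := by
  intro v hv w hw hvw
  rcases Sym2.eq_iff.1 hvw with ⟨-, h⟩ | ⟨h, -⟩
  · exact h
  · exact absurd (h ▸ (hpa v hv).1) hw

variable [Fintype V]

lemma isAlphaCritical_mk_mate_iff (hG : KonigEgervary G) (hM : IsMatching G M)
    (hMcard : M.card = muNum G) (hS : IsMaxStable G S)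
    (hforest : (SimpleGraph.fromRel fun x y => G.Adj x y ∧ x ∈ S ∧ y ∉ S).IsAcyclic)
    (hpa : ∀ v ∉ S, mate v ∈ S ∧ s(mate v, v) ∈ M) {v : V} (hv : v ∉ S) :
    IsAlphaCritical G s(mate v, v) ↔ v ∈ corona G := by
  refine ⟨fun h => ?_, fun ⟨T, hT, hvT⟩ => ?_⟩
  · obtain ⟨T, hT, -, hvT⟩ := h.exists_isMaxStable
    exact ⟨T, hT, hvT⟩
  · exact isAlphaCritical_of_isAcyclic hG hM hMcard hS hforest hT (hpa v hv).1 hvT hv (hpa v hv).2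

lemma setOf_isAlphaCritical_eq_image (hG : KonigEgervary G) (hM : IsMatching G M)
    (hMcard : M.card = muNum G) (hS : IsMaxStable G S)
    (hforest : (SimpleGraph.fromRel fun x y => G.Adj x y ∧ x ∈ S ∧ y ∉ S).IsAcyclic)
    (hpa : ∀ v ∉ S, mate v ∈ S ∧ s(mate v, v) ∈ M) :
    {e | IsAlphaCritical G e} = (fun v => s(mate v, v)) '' (corona G \ S) := by
  ext e
  refine ⟨fun he => ?_, ?_⟩
  · obtain ⟨v, hve, hvS⟩ := hS.1.exists_notMem he.1
    have : e = s(mate v, v) := hM.eq_of_mem_of_mem (he.mem hG hM hMcard) (hpa v hvS).2 hve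
      (Sym2.mem_mk_right _ _)
    subst this
    exact ⟨v, ⟨(isAlphaCritical_mk_mate_iff hG hM hMcard hS hforest hpa hvS).1 he, hvS⟩, rfl⟩
  · rintro ⟨v, ⟨hv, hvS⟩, rfl⟩
    exact (isAlphaCritical_mk_mate_iff hG hM hMcard hS hforest hpa hvS).2 hv

lemma sdiff_core_eq_image (hG : KonigEgervary G) (hM : IsMatching G M)
    (hMcard : M.card = muNum G) (hS : IsMaxStable G S)
    (hforest : (SimpleGraph.fromRel fun x y => G.Adj x y ∧ x ∈ S ∧ y ∉ S).IsAcyclic)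
    (hpa : ∀ v ∉ S, mate v ∈ S ∧ s(mate v, v) ∈ M) :
    ↑S \ core G = mate '' (corona G \ S) := by
  ext x
  refine ⟨fun ⟨hxS, hx⟩ => ?_, ?_⟩
  · obtain ⟨T, hT, hxT⟩ : ∃ T, IsMaxStable G T ∧ x ∉ T := by simpa [core] using hx
    obtain ⟨v, hvT, hvx⟩ := hT.exists_mk_mem_of_notMem hG hM hMcard hxT
    have hvS : v ∉ S := fun hvS => hS.1 hvS hxS (hM.1 _ hvx)
    have := hM.eq_of_mem_of_mem (hpa v hvS).2 hvx (Sym2.mem_mk_right _ _) (Sym2.mem_mk_left _ _)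
    exact ⟨v, ⟨⟨T, hT, hvT⟩, hvS⟩, Sym2.congr_left.1 (this.trans Sym2.eq_swap)⟩
  · rintro ⟨v, ⟨hv, hvS⟩, rfl⟩
    obtain ⟨T, hT, hpaT, -⟩ :=
      ((isAlphaCritical_mk_mate_iff hG hM hMcard hS hforest hpa hvS).2 hv).exists_isMaxStable
    exact ⟨(hpa v hvS).1, fun h => hpaT (h T hT)⟩

end Mate

/-- If `G` is a König-Egerváry graph having a maximum stable set `S` such that
the set of edges between `S` and `V - S` spans a forest, then
`ξ + η = α`, `σ + η = μ`, and `ξ + 2η + σ = |V(G)|`. -/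
theorem stmt_18 {V : Type*} [Fintype V] (G : SimpleGraph V)
    (hG : KonigEgervary G) (S : Finset V) (hS : IsMaxStable G S)
    (hforest : (SimpleGraph.fromRel
        fun x y => G.Adj x y ∧ x ∈ S ∧ y ∉ S).IsAcyclic) :
    xi G + eta G = alphaNum G ∧ sigmaNum G + eta G = muNum G ∧
      xi G + 2 * eta G + sigmaNum G = Fintype.card V := by
  obtain ⟨M, hM, hMcard⟩ := exists_isMatching_card_eq_muNum G
  choose! mate hpa using fun v (hv : v ∉ S) => hS.exists_mk_mem_of_notMem hG hM hMcard hv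
  have hsub : corona G \ S ⊆ (↑S)ᶜ := Set.sdiff_subset_compl _ _
  have heta : eta G = (corona G \ S).ncard := by
    rw [eta, setOf_isAlphaCritical_eq_image hG hM hMcard hS hforest hpa,
      ((injOn_mk_mate hpa).mono hsub).ncard_image]
  have hxi : (corona G \ S).ncard + xi G = alphaNum G := by
    rw [← ((injOn_mate hM hpa).mono hsub).ncard_image,
      ← sdiff_core_eq_image hG hM hMcard hS hforest hpa, hS.ncard_sdiff_core_add_xi]
  have hsigma := sigmaNum_add_ncard_corona G
  have hcorona := hS.ncard_corona_sdiff_add_alphaNum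
  unfold KonigEgervary at hG
  omega

end KEG
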